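/- Let φ be a norm on ℝ^{n+1}, let W = {x : φ°(x) ≤ 1}, let S ⊆ ℝ^{n+1}, let c ≥ 0 and r̄ > 0, and suppose that the (n+1)-dimensional Lebesgue outer measure satisfies |S + sW| = c·s^{n+1} for every 0 < s < r̄, where + denotes Minkowski sum. Then S is a finite set and card(S)·|W| = c. -/

import Mathlib

/-!
For a finite `F ⊆ S` and small `s > 0` the translates `a + sW`, `a ∈ F`, are pairwise disjoint,
so `card F · s^{n+1} |W| = |F + sW| ≤ |S + sW| = c s^{n+1}`. Hence `card F · |W| ≤ c` for every
finite `F ⊆ S`, which forces `S` to be finite, and then `F = S` gives equality. All that is used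
about `W` is that it is compact with positive volume, which holds because `φ` is comparable to the
Euclidean norm.
-/

open MeasureTheory Filter
open scoped RealInnerProductSpace ENNReal Pointwise Topology NNReal

noncomputable section

/-- `ℝ^{n+1}` with the Euclidean inner product. -/
abbrev Eu (n : ℕ) := EuclideanSpace ℝ (Fin (n + 1))

/-- `φ` is a norm on `ℝ^{n+1}`: positive away from `0`, absolutely homogeneous,
and subadditive. -/
def IsNorm {n : ℕ} (φ : Eu n → ℝ) : Prop :=
  (∀ v : Eu n, v ≠ 0 → 0 < φ v) ∧
  (∀ (c : ℝ) (v : Eu n), φ (c • v) = |c| * φ v) ∧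
  (∀ v w : Eu n, φ (v + w) ≤ φ v + φ w)

/-- `φ` is strictly convex: equality in the triangle inequality forces linear dependence. -/
def StrictlyConvexNorm {n : ℕ} (φ : Eu n → ℝ) : Prop :=
  ∀ v w : Eu n, φ (v + w) = φ v + φ w → φ v • w = φ w • v

/-- The dual (polar) norm `φ°(u) = sup {⟨u,v⟩ : φ(v) ≤ 1}`. -/
def dualN {n : ℕ} (φ : Eu n → ℝ) (u : Eu n) : ℝ :=
  sSup {r : ℝ | ∃ v : Eu n, φ v ≤ 1 ∧ r = ⟪u, v⟫}

/-- The `φ`-distance `δ_A^φ(x) = inf {φ°(x − a) : a ∈ A}`. -/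
def adist {n : ℕ} (φ : Eu n → ℝ) (A : Set (Eu n)) (x : Eu n) : ℝ :=
  sInf ((fun a => dualN φ (x - a)) '' A)

/-- The `φ`-unit normal bundle `N^φ(A)`. -/
def normalBundle {n : ℕ} (φ : Eu n → ℝ) (A : Set (Eu n)) : Set (Eu n × Eu n) :=
  {p | p.1 ∈ closure A ∧ dualN φ p.2 = 1 ∧ ∃ s : ℝ, 0 < s ∧ adist φ A (p.1 + s • p.2) = s}

/-- The `φ`-reach function `r_A^φ(a,η) = sup {s > 0 : δ_A^φ(a + sη) = s}`, valued in `[0,∞]`. -/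
def reach {n : ℕ} (φ : Eu n → ℝ) (A : Set (Eu n)) (a η : Eu n) : ℝ≥0∞ :=
  sSup {s : ℝ≥0∞ | ∃ t : ℝ, 0 < t ∧ adist φ A (a + t • η) = t ∧ s = ENNReal.ofReal t}

/-- The `φ`-cut locus of `A`. -/
def cutLocus {n : ℕ} (φ : Eu n → ℝ) (A : Set (Eu n)) : Set (Eu n) :=
  {x | ∃ a η : Eu n, (a, η) ∈ normalBundle φ A ∧ reach φ A a η < ⊤ ∧
      x = a + (reach φ A a η).toReal • η}

/-- The domain `Γ^φ(A)` of the `φ`-distance flow. -/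
def Gamma {n : ℕ} (φ : Eu n → ℝ) (A : Set (Eu n)) : Set (Eu n × Eu n × ℝ) :=
  {q | (q.1, q.2.1) ∈ normalBundle φ A ∧ 0 < q.2.2 ∧
      ENNReal.ofReal q.2.2 < reach φ A q.1 q.2.1}

open Metric Module

section Seminorm

variable {E : Type*} [NormedAddCommGroup E] [NormedSpace ℝ E] [FiniteDimensional ℝ E]

lemma Seminorm.continuous_of_finiteDimensional (p : Seminorm ℝ E) : Continuous p :=
  continuousOn_univ.1 (p.convexOn.continuousOn isOpen_univ)

lemma Seminorm.exists_pos_mul_norm_le [Nontrivial E] (p : Seminorm ℝ E)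
    (hp : ∀ x, x ≠ 0 → 0 < p x) : ∃ m, 0 < m ∧ ∀ x, m * ‖x‖ ≤ p x := by
  obtain ⟨x₀, hx₀, hmin⟩ := (isCompact_sphere (0 : E) 1).exists_isMinOn
    (NormedSpace.sphere_nonempty.2 zero_le_one) p.continuous_of_finiteDimensional.continuousOn
  have hx₀ : ‖x₀‖ = 1 := by simpa using hx₀
  refine ⟨p x₀, hp x₀ (norm_ne_zero_iff.1 (by simp [hx₀])), fun x => ?_⟩
  rcases eq_or_ne x 0 with rfl | hx
  · simp
  · have hx' : 0 < ‖x‖ := norm_pos_iff.2 hx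
    have : p x₀ ≤ p (‖x‖⁻¹ • x) := hmin (by simp [norm_smul, hx'.ne'])
    rw [map_smul_eq_mul, norm_inv, norm_norm] at this
    rwa [le_inv_mul_iff₀ hx', mul_comm] at this

end Seminorm

section MinkowskiSum

variable {E : Type*} [NormedAddCommGroup E] [NormedSpace ℝ E] {K : Set E}

lemma eventually_pairwiseDisjoint_vadd_smul (hK : Bornology.IsBounded K) (F : Finset E) :
    ∀ᶠ s in 𝓝[>] (0 : ℝ), (F : Set E).PairwiseDisjoint (fun a => a +ᵥ s • K) := by
  obtain ⟨R, hR, hKR⟩ := hK.subset_closedBall_lt 0 0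
  simp only [Set.PairwiseDisjoint, Set.Pairwise, Finset.mem_coe, eventually_all_finset]
  intro a _ b _
  rcases eq_or_ne a b with rfl | hab
  · exact Eventually.of_forall fun _ h => absurd rfl h
  have hsmall : ∀ᶠ s in 𝓝[>] (0 : ℝ), s < dist a b / (2 * R) :=
    nhdsWithin_le_nhds (Iio_mem_nhds (div_pos (dist_pos.2 hab) (by positivity)))
  filter_upwards [self_mem_nhdsWithin, hsmall] with s (hs : 0 < s) hsR _
  have hball : ∀ c : E, c +ᵥ s • K ⊆ closedBall c (s * R) := fun c => by
    simpa [smul_closedBall _ _ hR.le, abs_of_pos hs] using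
      Set.vadd_set_mono (Set.smul_set_mono (a := s) hKR) (a := c)
  refine (closedBall_disjoint_closedBall ?_).mono (hball a) (hball b)
  rw [lt_div_iff₀ (by positivity)] at hsR
  linarith

variable [MeasurableSpace E] [BorelSpace E] [FiniteDimensional ℝ E] (μ : Measure E)
  [μ.IsAddHaarMeasure]

lemma measure_finset_add_smul (hK : IsCompact K) (F : Finset E) :
    ∀ᶠ s in 𝓝[>] (0 : ℝ),
      μ (F + s • K) = F.card * (ENNReal.ofReal (s ^ finrank ℝ E) * μ K) := by
  filter_upwards [self_mem_nhdsWithin, eventually_pairwiseDisjoint_vadd_smul hK.isBounded F]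
    with s (hs : 0 < s) hdisj
  rw [← Set.iUnion_add_left_image]
  change μ (⋃ a ∈ F, a +ᵥ s • K) = _
  rw [measure_biUnion_finset hdisj
    fun a _ => (hK.smul s).isClosed.measurableSet.const_vadd a]
  simp [measure_vadd, Measure.addHaar_smul, abs_of_pos (pow_pos hs _)]

variable {μ} {S : Set E} {c : ℝ}
  (hS : ∀ᶠ s in 𝓝[>] (0 : ℝ), μ (S + s • K) = ENNReal.ofReal (c * s ^ finrank ℝ E))
include hS

lemma card_mul_measure_le_of_subset (hK : IsCompact K) {F : Finset E} (hF : ↑F ⊆ S) :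
    F.card * μ K ≤ ENNReal.ofReal c := by
  obtain ⟨s, hFs, hSs, hs : 0 < s⟩ :=
    ((measure_finset_add_smul μ hK F).and (hS.and self_mem_nhdsWithin)).exists
  have hsd : ENNReal.ofReal (s ^ finrank ℝ E) ≠ 0 := by simp [hs]
  rw [← ENNReal.mul_le_mul_iff_right hsd ENNReal.ofReal_ne_top, mul_left_comm, ← hFs,
    ← ENNReal.ofReal_mul (by positivity), mul_comm, ← hSs]
  exact measure_mono (Set.add_subset_add_right hF)

lemma card_mul_measure_eq (hK : IsCompact K) {F : Finset E} (hF : ↑F = S) :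
    F.card * μ K = ENNReal.ofReal c := by
  obtain ⟨s, hFs, hSs, hs : 0 < s⟩ :=
    ((measure_finset_add_smul μ hK F).and (hS.and self_mem_nhdsWithin)).exists
  have hsd : ENNReal.ofReal (s ^ finrank ℝ E) ≠ 0 := by simp [hs]
  rw [← (ENNReal.mul_right_inj hsd ENNReal.ofReal_ne_top), mul_left_comm, ← hFs,
    ← ENNReal.ofReal_mul (by positivity), mul_comm, ← hSs, hF]

theorem finite_and_ncard_mul_measure_eq (hK : IsCompact K) (hK₀ : μ K ≠ 0) (hc : 0 ≤ c) :
    S.Finite ∧ S.ncard * (μ K).toReal = c := by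
  have hfin : S.Finite := by
    by_contra hinf
    obtain ⟨N, hN⟩ := ENNReal.exists_nat_mul_gt hK₀ ENNReal.ofReal_ne_top
    obtain ⟨F, hFS, rfl⟩ := Set.Infinite.exists_subset_card_eq hinf N
    exact (card_mul_measure_le_of_subset hS hK hFS).not_gt hN
  refine ⟨hfin, ?_⟩
  have := congrArg ENNReal.toReal (card_mul_measure_eq hS hK hfin.coe_toFinset)
  rwa [ENNReal.toReal_mul, ENNReal.toReal_natCast, ENNReal.toReal_ofReal hc,
    ← Set.ncard_eq_toFinset_card S hfin] at this

end MinkowskiSum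

namespace IsNorm

variable {n : ℕ} {φ : Eu n → ℝ}

def toSeminorm (hφ : IsNorm φ) : Seminorm ℝ (Eu n) :=
  Seminorm.of φ hφ.2.2 fun a v => by rw [hφ.2.1, Real.norm_eq_abs]

lemma exists_pos_inner_le (hφ : IsNorm φ) :
    ∃ R, 0 < R ∧ ∀ u v : Eu n, φ v ≤ 1 → ⟪u, v⟫ ≤ R * ‖u‖ := by
  obtain ⟨m, hm, hφm⟩ := hφ.toSeminorm.exists_pos_mul_norm_le hφ.1
  refine ⟨m⁻¹, inv_pos.2 hm, fun u v hv => ?_⟩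
  have hv : ‖v‖ ≤ m⁻¹ := by
    rw [← mul_one m⁻¹, le_inv_mul_iff₀ hm]
    exact (hφm v).trans hv
  calc ⟪u, v⟫ ≤ ‖u‖ * ‖v‖ := real_inner_le_norm u v
    _ ≤ m⁻¹ * ‖u‖ := by rw [mul_comm]; gcongr

lemma exists_pos_le_mul_norm (hφ : IsNorm φ) : ∃ M, 0 < M ∧ ∀ v, φ v ≤ M * ‖v‖ :=
  hφ.toSeminorm.bound_of_continuous_normedSpace hφ.toSeminorm.continuous_of_finiteDimensional

lemma bddAbove_inner_of_le_one (hφ : IsNorm φ) (u : Eu n) :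
    BddAbove {r : ℝ | ∃ v : Eu n, φ v ≤ 1 ∧ r = ⟪u, v⟫} := by
  obtain ⟨R, -, hR⟩ := hφ.exists_pos_inner_le
  exact ⟨R * ‖u‖, by rintro _ ⟨v, hv, rfl⟩; exact hR u v hv⟩

lemma dualN_le_one_iff (hφ : IsNorm φ) {u : Eu n} :
    dualN φ u ≤ 1 ↔ ∀ v, φ v ≤ 1 → ⟪u, v⟫ ≤ 1 := by
  have h0 : φ 0 ≤ 1 := (map_zero hφ.toSeminorm).trans_le zero_le_one
  rw [dualN, csSup_le_iff (hφ.bddAbove_inner_of_le_one u) ⟨0, 0, h0, by simp⟩]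
  simp [forall_comm (α := ℝ)]

lemma isClosed_setOf_dualN_le_one (hφ : IsNorm φ) : IsClosed {u : Eu n | dualN φ u ≤ 1} := by
  simp_rw [hφ.dualN_le_one_iff, Set.ofPred_forall]
  exact isClosed_iInter fun v => isClosed_iInter fun _ =>
    isClosed_le (continuous_id.inner continuous_const) continuous_const

lemma setOf_dualN_le_one_subset_closedBall (hφ : IsNorm φ) :
    ∃ M, {u : Eu n | dualN φ u ≤ 1} ⊆ closedBall 0 M := by
  obtain ⟨M, hM, hφM⟩ := hφ.exists_pos_le_mul_norm
  refine ⟨M, fun u hu => ?_⟩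
  rw [mem_closedBall_zero_iff]
  rcases eq_or_ne u 0 with rfl | hu0
  · simpa using hM.le
  have hu' : 0 < ‖u‖ := norm_pos_iff.2 hu0
  -- test `u` against `v = u / (M ‖u‖)`, which has `φ v ≤ 1` and `⟪u, v⟫ = ‖u‖ / M`
  have hv : φ ((M * ‖u‖)⁻¹ • u) ≤ 1 := by
    rw [hφ.2.1, abs_of_pos (by positivity), inv_mul_le_one₀ (by positivity)]
    exact hφM u
  have := (hφ.dualN_le_one_iff.1 hu) _ hv
  rw [real_inner_smul_right, real_inner_self_eq_norm_sq, inv_mul_le_one₀ (by positivity), sq,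
    mul_comm M] at this
  exact le_of_mul_le_mul_left this hu'

lemma ball_subset_setOf_dualN_le_one (hφ : IsNorm φ) :
    ∃ r, 0 < r ∧ ball 0 r ⊆ {u : Eu n | dualN φ u ≤ 1} := by
  obtain ⟨R, hR, hφR⟩ := hφ.exists_pos_inner_le
  refine ⟨R⁻¹, inv_pos.2 hR, fun u hu => hφ.dualN_le_one_iff.2 fun v hv => ?_⟩
  rw [mem_ball_zero_iff, ← mul_one R⁻¹, lt_inv_mul_iff₀ hR] at hu
  exact (hφR u v hv).trans hu.le

lemma isCompact_setOf_dualN_le_one (hφ : IsNorm φ) : IsCompact {u : Eu n | dualN φ u ≤ 1} := by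
  obtain ⟨M, hM⟩ := hφ.setOf_dualN_le_one_subset_closedBall
  exact (isCompact_closedBall 0 M).of_isClosed_subset hφ.isClosed_setOf_dualN_le_one hM

lemma volume_setOf_dualN_le_one_ne_zero (hφ : IsNorm φ) :
    volume {u : Eu n | dualN φ u ≤ 1} ≠ 0 := by
  obtain ⟨r, hr, hball⟩ := hφ.ball_subset_setOf_dualN_le_one
  exact ((measure_ball_pos volume 0 hr).trans_le (measure_mono hball)).ne'

end IsNorm

/-- if `|S + sW| = c·s^{n+1}` for all `0 < s < r̄`, then `S` is finite and
`card(S)·|W| = c`. -/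
theorem finite_from_minkowski_growth {n : ℕ} (φ : Eu n → ℝ) (hφ : IsNorm φ)
    (S : Set (Eu n)) (c : ℝ) (hc : 0 ≤ c) (rbar : ℝ) (hrbar : 0 < rbar)
    (hvol : ∀ s : ℝ, 0 < s → s < rbar →
      volume (S + s • {x : Eu n | dualN φ x ≤ 1}) = ENNReal.ofReal (c * s ^ (n + 1))) :
    S.Finite ∧ (S.ncard : ℝ) * (volume {x : Eu n | dualN φ x ≤ 1}).toReal = c := by
  refine finite_and_ncard_mul_measure_eq ?_ hφ.isCompact_setOf_dualN_le_one
    hφ.volume_setOf_dualN_le_one_ne_zero hc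
  rw [finrank_euclideanSpace_fin]
  filter_upwards [self_mem_nhdsWithin, nhdsWithin_le_nhds (Iio_mem_nhds hrbar)] with s hs hsr
  exact hvol s hs hsr
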